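/- For all λ, λ₀ ∈ ρ(A_B) and every f ∈ Ran(Γ₁ − BΓ₂), the solution operators satisfy the Hilbert-type identity S_{λ,B}f = S_{λ₀,B}f + (λ − λ₀)(A_B − λI)^{−1} S_{λ₀,B}f. -/
import Mathlib


open scoped InnerProductSpace

variable {H 𝓗 𝓚 : Type*}
  [NormedAddCommGroup H] [InnerProductSpace ℂ H] [CompleteSpace H]
  [NormedAddCommGroup 𝓗] [InnerProductSpace ℂ 𝓗] [CompleteSpace 𝓗]
  [NormedAddCommGroup 𝓚] [InnerProductSpace ℂ 𝓚] [CompleteSpace 𝓚]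

/-- `R` is the (bounded, everywhere defined) inverse of `A_B − λ`, where `A_B` is the
restriction of `T` to `{u ∈ D(T) : Γ₁ u = B (Γ₂ u)}`. -/
def IsResolventAt (dom : Submodule ℂ H) (T : dom →ₗ[ℂ] H)
    (Γ₁ : dom →ₗ[ℂ] 𝓗) (Γ₂ : dom →ₗ[ℂ] 𝓚) (B : 𝓚 →L[ℂ] 𝓗)
    (lam : ℂ) (R : H →L[ℂ] H) : Prop :=
  (∀ h : H, ∃ hm : R h ∈ dom,
      Γ₁ ⟨R h, hm⟩ = B (Γ₂ ⟨R h, hm⟩) ∧ T ⟨R h, hm⟩ - lam • R h = h) ∧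
  (∀ u : dom, Γ₁ u = B (Γ₂ u) → R (T u - lam • (u : H)) = (u : H))

/-- The resolvent set `ρ(A_B)`. -/
def resolventSetB (dom : Submodule ℂ H) (T : dom →ₗ[ℂ] H)
    (Γ₁ : dom →ₗ[ℂ] 𝓗) (Γ₂ : dom →ₗ[ℂ] 𝓚) (B : 𝓚 →L[ℂ] 𝓗) : Set ℂ :=
  {lam | ∃ R : H →L[ℂ] H, IsResolventAt dom T Γ₁ Γ₂ B lam R}

theorem stmt1 (dom : Submodule ℂ H) (T : dom →ₗ[ℂ] H)
    (Γ₁ : dom →ₗ[ℂ] 𝓗) (Γ₂ : dom →ₗ[ℂ] 𝓚) (B : 𝓚 →L[ℂ] 𝓗)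
    (lam lam₀ : ℂ) (R : H →L[ℂ] H)
    (hR : IsResolventAt dom T Γ₁ Γ₂ B lam R)
    (hlam₀ : lam₀ ∈ resolventSetB dom T Γ₁ Γ₂ B)
    (f : 𝓗) (hf : f ∈ Set.range (fun u : dom => Γ₁ u - B (Γ₂ u)))
    -- `u = S_{λ,B} f` and `u₀ = S_{λ₀,B} f`
    (u u₀ : dom)
    (hu : T u = lam • (u : H) ∧ Γ₁ u - B (Γ₂ u) = f)
    (hu₀ : T u₀ = lam₀ • (u₀ : H) ∧ Γ₁ u₀ - B (Γ₂ u₀) = f) :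
    (u : H) = (u₀ : H) + (lam - lam₀) • R (u₀ : H) := by
  set w : dom := u - u₀ with hw
  have hΓ : Γ₁ w = B (Γ₂ w) := by
    have : Γ₁ u - B (Γ₂ u) = Γ₁ u₀ - B (Γ₂ u₀) := hu.2.trans hu₀.2.symm
    simp only [hw, map_sub]
    linear_combination (norm := abel) this
  have key : R (T w - lam • (w : H)) = (w : H) := hR.2 w hΓ
  have hTw : T w - lam • (w : H) = (lam - lam₀) • (u₀ : H) := by
    have h1 : T w = lam • (u : H) - lam₀ • (u₀ : H) := by
      rw [hw, map_sub, hu.1, hu₀.1]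
    rw [h1]
    push_cast [hw]
    module
  rw [hTw, map_smul] at key
  have hc : ((w : H)) = (u : H) - (u₀ : H) := rfl
  rw [hc] at key
  rw [key]; abel
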